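/- Let G be a topological group with identity e. Define α : G → Aut(G̃) on the path-construction universal cover G̃ by α_g([h]) = [t ↦ g·h(t)·g⁻¹]. Then α is well-defined, each α_g is a group automorphism of G̃, and the pair (τ, α) satisfies the crossed module identities: α_{τ([h])}([h']) = [h][h'][h]⁻¹ and τ(α_g([h])) = g·τ([h])·g⁻¹. -/

import Mathlib

/-!
Conjugation by `g` is a continuous self-map of `G` fixing `e`, so it preserves homotopy of paths,
and the automorphism identities already hold pointwise. For the Peiffer identity, slide the outer
factors of `t ↦ h(t)·h'(t)·h(t)⁻¹` along `h` to its endpoint `a`; the start of the path stays at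
`e` throughout because `x·e·x⁻¹ = e` for every `x`.
-/

namespace PathCurv

variable {G : Type*} [Group G] [TopologicalSpace G] [IsTopologicalGroup G]

/-- The pointwise product of two paths starting at the identity of a topological group. -/
def mulPath {a b : G} (h : Path (1 : G) a) (h' : Path (1 : G) b) : Path (1 : G) (a * b) :=
  ⟨⟨fun t => h t * h' t, h.continuous.mul h'.continuous⟩, by simp, by simp⟩

/-- The pointwise inverse of a path starting at the identity. -/
def invPath {a : G} (h : Path (1 : G) a) : Path (1 : G) a⁻¹ :=
  ⟨⟨fun t => (h t)⁻¹, h.continuous.inv⟩, by simp, by simp⟩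

/-- The pointwise conjugate `t ↦ g·h(t)·g⁻¹` of a path starting at the identity. -/
def conjPath {a : G} (g : G) (h : Path (1 : G) a) : Path (1 : G) (g * a * g⁻¹) :=
  ⟨⟨fun t => g * h t * g⁻¹,
      (continuous_const.mul h.continuous).mul continuous_const⟩, by simp, by simp⟩

end PathCurv

namespace Path

variable {X Y Z : Type*} [TopologicalSpace X] [TopologicalSpace Y] [TopologicalSpace Z]

/-- The homotopy is `(s, t) ↦ Φ(γ (max s t), k t)`; it stays at `z₀` for `t = 0` because
`Φ(·, y₀)` is constant. -/
theorem homotopic_of_slide_fst (Φ : C(X × Y, Z)) {x₀ x₁ : X} {y₀ y₁ : Y} {z₀ z₁ : Z}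
    (hΦ : ∀ x, Φ (x, y₀) = z₀) (γ : Path x₀ x₁) (k : Path y₀ y₁) {p q : Path z₀ z₁}
    (hp : ∀ t, p t = Φ (γ t, k t)) (hq : ∀ t, q t = Φ (x₁, k t)) : p.Homotopic q := by
  refine ⟨⟨⟨⟨fun st => Φ (γ (max st.1 st.2), k st.2), by fun_prop⟩, ?_, ?_⟩, ?_⟩⟩
  · intro t
    simp [hp]
  · intro t
    simp [hq, unitInterval.le_one']
  · rintro s t (rfl | rfl)
    · simp [hΦ]
    · simpa [unitInterval.le_one'] using (hq 1).symm

end Path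

namespace PathCurv

variable {G : Type*} [Group G] [TopologicalSpace G] [IsTopologicalGroup G] {a b : G}

theorem conjPath_homotopic {h₀ h₁ : Path (1 : G) a} (hh : h₀.Homotopic h₁) (g : G) :
    (conjPath g h₀).Homotopic (conjPath g h₁) :=
  (hh.map ⟨fun x => g * x * g⁻¹, by fun_prop⟩).pathCast (by simp) (by simp)

theorem conjPath_mulPath (g : G) (h : Path (1 : G) a) (h' : Path (1 : G) b) :
    conjPath g (mulPath h h') = (mulPath (conjPath g h) (conjPath g h')).cast rfl (by simp [mul_assoc]) := by
  ext t
  simp [conjPath, mulPath, mul_assoc]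

theorem conjPath_inv_conjPath (g : G) (h : Path (1 : G) a) :
    (conjPath g⁻¹ (conjPath g h)).cast rfl (by simp [mul_assoc]) = h := by
  ext t
  simp [conjPath, mul_assoc]

theorem mulPath_mulPath_invPath_homotopic_conjPath (h : Path (1 : G) a) (h' : Path (1 : G) b) :
    (mulPath (mulPath h h') (invPath h)).Homotopic (conjPath a h') :=
  Path.homotopic_of_slide_fst ⟨fun x : G × G => x.1 * x.2 * x.1⁻¹, by fun_prop⟩
    (fun x => by simp) h h' (fun _ => rfl) (fun _ => rfl)

end PathCurv

open PathCurv in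
/-- The conjugation action `α_g([h]) = [t ↦ g·h(t)·g⁻¹]` on the path-construction
universal cover `G̃` of a topological group `G` is well-defined on homotopy classes,
each `α_g` is a group automorphism of `G̃` (multiplicative and inverted by `α_{g⁻¹}`),
and together with endpoint evaluation `τ` it satisfies the crossed module identities:
`α_{τ([h])}([h']) = [h]·[h']·[h]⁻¹` and `τ(α_g([h])) = g·τ([h])·g⁻¹`. -/
theorem universalCover_conj_crossedModule
    {G : Type*} [Group G] [TopologicalSpace G] [IsTopologicalGroup G] :
    -- well-definedness on homotopy classes
    (∀ (a g : G) (h₀ h₁ : Path (1 : G) a), h₀.Homotopic h₁ →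
        (conjPath g h₀).Homotopic (conjPath g h₁)) ∧
    -- each `α_g` is multiplicative
    (∀ (a b g : G) (h : Path (1 : G) a) (h' : Path (1 : G) b),
        (conjPath g (mulPath h h')).Homotopic
          ((mulPath (conjPath g h) (conjPath g h')).cast rfl (by group))) ∧
    -- `α_{g⁻¹}` inverts `α_g`, so each `α_g` is an automorphism
    (∀ (a g : G) (h : Path (1 : G) a),
        ((conjPath g⁻¹ (conjPath g h)).cast rfl (by group)).Homotopic h) ∧
    -- Peiffer identity: `α_{τ([h])}([h']) = [h]·[h']·[h]⁻¹`
    (∀ (a b : G) (h : Path (1 : G) a) (h' : Path (1 : G) b),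
        (conjPath a h').Homotopic (mulPath (mulPath h h') (invPath h))) ∧
    -- equivariance: `τ(α_g([h])) = g·τ([h])·g⁻¹`
    (∀ (a g : G) (h : Path (1 : G) a), (conjPath g h) 1 = g * h 1 * g⁻¹) := by
  refine ⟨fun _ g _ _ hh => conjPath_homotopic hh g, fun _ _ g h h' => ?_, fun _ g h => ?_,
    fun _ _ h h' => (mulPath_mulPath_invPath_homotopic_conjPath h h').symm, fun _ _ _ => rfl⟩
  · rw [conjPath_mulPath]
  · rw [conjPath_inv_conjPath]
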